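/- arXiv:math/0508311 — 4 statements merged into one kernel-verified Lean document; each statement's English description precedes it below -/
import Mathlib

section
/- Let X be a normed space, x ≠ 0, and G a convex weakly open neighborhood of x such that the norm diameter of G ∩ {z : ‖z‖ = ‖x‖} is less than ε/2. Let α > 0 satisfy α < ε/2, α < ‖x‖, and αB ⊆ (G − x)/2, where B is the closed unit ball. Then for every y ∈ (x + G)/2 with |‖y‖ − ‖x‖| < α, one has (‖x‖/‖y‖)·y ∈ G. -/
open Metric Set Pointwise

/-- A set is weakly open if its image in `WeakSpace ℝ X` is open. -/
def WeaklyOpen {X : Type*} [NormedAddCommGroup X] [NormedSpace ℝ X] (s : Set X) : Prop :=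
  IsOpen ((toWeakSpace ℝ X) '' s)

theorem stmt1 {X : Type*} [NormedAddCommGroup X] [NormedSpace ℝ X]
    (ε : ℝ) (hε : 0 < ε) (x : X) (hx : x ≠ 0) (G : Set X)
    (hGconv : Convex ℝ G) (hGopen : WeaklyOpen G) (hxG : x ∈ G)
    (hdiam : Metric.diam (G ∩ {z : X | ‖z‖ = ‖x‖}) < ε / 2)
    (α : ℝ) (hα : 0 < α) (hαε : α < ε / 2) (hαx : α < ‖x‖)
    (hαB : α • Metric.closedBall (0 : X) 1 ⊆ (fun g => ((1 : ℝ) / 2) • (g - x)) '' G)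
    (y : X) (hy : y ∈ (fun g => ((1 : ℝ) / 2) • (x + g)) '' G)
    (hyx : |‖y‖ - ‖x‖| < α) :
    (‖x‖ / ‖y‖) • y ∈ G := by
  obtain ⟨g, hg, rfl⟩ := hy
  set y : X := ((1 : ℝ) / 2) • (x + g) with hydef
  have hy0 : 0 < ‖y‖ := by
    by_contra h
    push_neg at h
    have : ‖y‖ = 0 := le_antisymm h (norm_nonneg _)
    rw [this] at hyx
    have : ‖x‖ < α := by
      have := abs_lt.1 hyx
      linarith [this.1]
    linarith
  set z : X := (‖x‖ / ‖y‖) • y with hzdef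
  have hnorm : ‖z - y‖ = |‖x‖ - ‖y‖| := by
    have : z - y = ((‖x‖ - ‖y‖) / ‖y‖) • y := by
      rw [hzdef]
      match_scalars <;> field_simp <;> ring
    rw [this, norm_smul, Real.norm_eq_abs, abs_div, abs_of_pos hy0,
      div_mul_cancel₀ _ hy0.ne']
  have hmem : z - y ∈ α • Metric.closedBall (0 : X) 1 := by
    refine ⟨(1 / α) • (z - y), ?_, ?_⟩
    · simp only [Metric.mem_closedBall, dist_zero_right, norm_smul, Real.norm_eq_abs,
        abs_of_pos (by positivity : (0:ℝ) < 1 / α)]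
      rw [hnorm, one_div, inv_mul_le_iff₀ hα, mul_one]
      have : |‖x‖ - ‖y‖| < α := by rwa [abs_sub_comm]
      linarith
    · dsimp only
      rw [smul_smul, mul_one_div, div_self hα.ne', one_smul]
  obtain ⟨g', hg', hgeq⟩ := hαB hmem
  have : z = ((1:ℝ)/2) • g + ((1:ℝ)/2) • g' := by
    dsimp only at hgeq
    have : z = y + ((1:ℝ)/2) • (g' - x) := by rw [hgeq]; abel
    rw [this, hydef, smul_add, smul_sub]
    abel
  rw [this]
  exact hGconv hg hg' (by norm_num) (by norm_num) (by norm_num)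
end

section
/- Let X be a Banach space with a Kadec norm. Then for every ε > 0 there exists a countable cover X = ⋃_{i≥0} X_i such that for every x ∈ X_i there exists a weakly open neighborhood W of x with W ∩ X_i ⊆ x + εB, where B is the closed unit ball. In particular, each point of X_i has a weak neighborhood whose intersection with X_i has norm diameter at most 2ε. -/
open Metric Set

/-- The norm is Kadec: the weak and norm topologies induce the same relatively
open sets on the unit sphere. -/
def KadecNorm (X : Type*) [NormedAddCommGroup X] [NormedSpace ℝ X] : Prop :=
  ∀ T : Set X,
    (∃ U : Set X, IsOpen U ∧ T = U ∩ {x : X | ‖x‖ = 1}) ↔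
    (∃ U : Set X, WeaklyOpen U ∧ T = U ∩ {x : X | ‖x‖ = 1})

/-!
By rescaling, the Kadec property says that on every sphere `‖y‖ = ‖x‖ > 0` small weak
neighbourhoods of `x` are norm-small. In infinite dimensions every weak neighbourhood of `x`
contains one that is stable under translation along some line, and that line through a point `y`
with `‖y‖ ≤ ‖x‖` meets the sphere on both sides of `y`; by convexity of norm balls, smallness
passes from the sphere to the ball `‖y‖ ≤ ‖x‖`. Weak continuity of scalar multiplication then
passes it to a ball `‖y‖ ≤ ‖x‖ + η`. So every `x` lies in one of the countably many sets
`{x | ‖x‖ ≤ q ∧ some weak neighbourhood of x meets the q-ball inside x + εB}`, `q ∈ ℚ`.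
-/

open Filter Topology

theorem Convex.mem_of_add_smul_mem_of_sub_smul_mem {E : Type*} [AddCommGroup E] [Module ℝ E]
    {s : Set E} (hs : Convex ℝ s) {y f : E} {a b : ℝ} (ha : 0 ≤ a) (hb : 0 ≤ b)
    (hpos : y + a • f ∈ s) (hneg : y - b • f ∈ s) : y ∈ s := by
  have hline : Convex ℝ {t : ℝ | y + t • f ∈ s} :=
    (hs.translate_preimage_right y).linear_preimage (LinearMap.toSpanSingleton ℝ E f)
  have hneg' : y + (-b) • f ∈ s := by rwa [neg_smul, ← sub_eq_add_neg]
  simpa using (convex_iff_ordConnected.1 hline).out hneg' hpos ⟨by linarith, ha⟩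

section

variable {X : Type*} [NormedAddCommGroup X] [NormedSpace ℝ X]

noncomputable def weakNhds (x : X) : Filter X :=
  comap (toWeakSpace ℝ X) (𝓝 (toWeakSpace ℝ X x))

theorem weakNhds_eq_comap_pi (x : X) :
    weakNhds x = comap (fun y (l : StrongDual ℝ X) => l y) (Filter.pi fun l => 𝓝 (l x)) := by
  have hind : 𝓝 (toWeakSpace ℝ X x) =
      comap (fun (y : WeakSpace ℝ X) (l : StrongDual ℝ X) => l y) (𝓝 fun l => l x) :=
    nhds_induced _ _
  rw [weakNhds, hind, nhds_pi, comap_comap]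
  rfl

theorem WeaklyOpen.mem_weakNhds {U : Set X} (hU : WeaklyOpen U) {x : X} (hx : x ∈ U) :
    U ∈ weakNhds x := by
  refine mem_comap.2 ⟨_, hU.mem_nhds (mem_image_of_mem _ hx), fun y hy => ?_⟩
  obtain ⟨z, hz, hzy⟩ := hy
  rwa [← (toWeakSpace ℝ X).injective hzy]

theorem exists_weaklyOpen_of_eventually_weakNhds {x : X} {p : X → Prop}
    (h : ∀ᶠ y in weakNhds x, p y) : ∃ W : Set X, WeaklyOpen W ∧ x ∈ W ∧ ∀ y ∈ W, p y := by
  obtain ⟨t, ht, hpt⟩ := mem_comap.1 h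
  obtain ⟨t', ht't, ht', hxt'⟩ := mem_nhds_iff.1 ht
  refine ⟨toWeakSpace ℝ X ⁻¹' t', ?_, hxt', fun y hy => hpt (ht't hy)⟩
  rwa [WeaklyOpen, (toWeakSpace ℝ X).surjective.image_preimage]

theorem tendsto_smul_weakNhds (c : ℝ) (x : X) :
    Tendsto (fun p : ℝ × X => p.1 • p.2) (𝓝 c ×ˢ weakNhds x) (weakNhds (c • x)) := by
  refine tendsto_comap_iff.2 ?_
  have hsmul := (continuous_smul (M := ℝ) (X := WeakSpace ℝ X)).tendsto (c, toWeakSpace ℝ X x)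
  rw [nhds_prod_eq] at hsmul
  exact hsmul.comp (tendsto_id.prodMap tendsto_comap)

theorem weakNhds_le_nhds [FiniteDimensional ℝ X] (x : X) : weakNhds x ≤ 𝓝 x := by
  have : FiniteDimensional ℝ (WeakSpace ℝ X) := ‹FiniteDimensional ℝ X›
  have hcont := LinearMap.continuous_of_finiteDimensional
    ((toWeakSpace ℝ X).symm : WeakSpace ℝ X →ₗ[ℝ] X)
  exact (hcont.tendsto _).comp tendsto_comap

theorem exists_ne_zero_forall_eq_zero (hX : ¬ FiniteDimensional ℝ X)
    (I : Finset (StrongDual ℝ X)) :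
    ∃ f : X, f ≠ 0 ∧ ∀ l ∈ I, l f = 0 := by
  let Φ : X →ₗ[ℝ] (I → ℝ) := LinearMap.pi fun l => (l : StrongDual ℝ X).toLinearMap
  obtain ⟨f, hf, hf0⟩ := (Submodule.ne_bot_iff _).1 fun hbot =>
    hX (FiniteDimensional.of_injective Φ (LinearMap.ker_eq_bot.1 hbot))
  exact ⟨f, hf0, fun l hl => congrFun (LinearMap.mem_ker.1 hf) ⟨l, hl⟩⟩

theorem exists_mem_weakNhds_add_smul_mem (hX : ¬ FiniteDimensional ℝ X) {x : X} {U : Set X}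
    (hU : U ∈ weakNhds x) :
    ∃ V ∈ weakNhds x, V ⊆ U ∧ ∃ f : X, f ≠ 0 ∧ ∀ y ∈ V, ∀ t : ℝ, y + t • f ∈ V := by
  rw [weakNhds_eq_comap_pi] at hU ⊢
  obtain ⟨s, hs, hsU⟩ := hU
  obtain ⟨I, u, hu, hIu⟩ := mem_pi'.1 hs
  obtain ⟨f, hf0, hf⟩ := exists_ne_zero_forall_eq_zero hX I
  refine ⟨{y | ∀ l ∈ I, l y ∈ u l}, preimage_mem_comap (pi_mem_pi I.finite_toSet fun l _ => hu l),
    fun y hy => hsU (hIu hy), f, hf0, fun y hy t l hl => ?_⟩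
  simpa [hf l hl] using hy l hl

theorem exists_nonneg_norm_add_smul_eq {y f : X} (hf : f ≠ 0) {R : ℝ} (hy : ‖y‖ ≤ R) :
    ∃ t : ℝ, 0 ≤ t ∧ ‖y + t • f‖ = R := by
  have hcont : Continuous fun t : ℝ => ‖y + t • f‖ := by fun_prop
  have htop : Tendsto (fun t : ℝ => ‖y + t • f‖) atTop atTop := by
    refine tendsto_atTop_mono (fun t => ?_) (tendsto_atTop_add_const_right _ (-‖y‖)
      (Tendsto.atTop_mul_const (norm_pos_iff.2 hf) tendsto_id))
    have hsub : ‖t • f‖ ≤ ‖y + t • f‖ + ‖y‖ := by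
      simpa using norm_sub_le (y + t • f) y
    rw [norm_smul, Real.norm_eq_abs] at hsub
    have habs : t * ‖f‖ ≤ |t| * ‖f‖ := mul_le_mul_of_nonneg_right (le_abs_self t) (norm_nonneg f)
    simp only [id]
    linarith
  obtain ⟨t, ht, hty⟩ := intermediate_value_Ici hcont.continuousOn htop
    (by simpa using hy : R ∈ Ici ‖y + (0 : ℝ) • f‖)
  exact ⟨t, ht, hty⟩

theorem eventually_weakNhds_norm_le_imp_of_norm_eq (hX : ¬ FiniteDimensional ℝ X)
    {x : X} {R δ : ℝ} (h : ∀ᶠ y in weakNhds x, ‖y‖ = R → y ∈ closedBall x δ) :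
    ∀ᶠ y in weakNhds x, ‖y‖ ≤ R → y ∈ closedBall x δ := by
  obtain ⟨V, hV, hVU, f, hf, hVf⟩ := exists_mem_weakNhds_add_smul_mem hX h
  filter_upwards [hV] with y hy hyR
  obtain ⟨a, ha, hya⟩ := exists_nonneg_norm_add_smul_eq hf hyR
  obtain ⟨b, hb, hyb⟩ := exists_nonneg_norm_add_smul_eq (neg_ne_zero.2 hf) hyR
  rw [smul_neg, ← sub_eq_add_neg] at hyb
  have hyb' : y - b • f ∈ V := by simpa [sub_eq_add_neg] using hVf y hy (-b)
  exact (convex_closedBall x δ).mem_of_add_smul_mem_of_sub_smul_mem ha hb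
    (hVU (hVf y hy a) hya) (hVU hyb' hyb)

theorem KadecNorm.eventually_weakNhds_norm_eq_imp (hK : KadecNorm X) {x : X} (hx : x ≠ 0)
    {r : ℝ} (hr : 0 < r) : ∀ᶠ y in weakNhds x, ‖y‖ = ‖x‖ → y ∈ closedBall x r := by
  have hR : 0 < ‖x‖ := norm_pos_iff.2 hx
  set u := ‖x‖⁻¹ • x
  have hu : ‖u‖ = 1 := by rw [norm_smul, norm_inv, norm_norm, inv_mul_cancel₀ hR.ne']
  obtain ⟨U, hU, hUeq⟩ := (hK (ball u (r / ‖x‖) ∩ {y | ‖y‖ = 1})).1 ⟨_, isOpen_ball, rfl⟩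
  have huU : u ∈ U ∩ {y | ‖y‖ = 1} := hUeq ▸ ⟨mem_ball_self (by positivity), hu⟩
  have hscale := (tendsto_smul_weakNhds ‖x‖⁻¹ x).comp (tendsto_const_nhds.prodMk tendsto_id)
  filter_upwards [hscale.eventually (hU.mem_weakNhds huU.1)] with y hyU hyx
  have hyS : ‖x‖⁻¹ • y ∈ U ∩ {y | ‖y‖ = 1} := by
    refine ⟨hyU, ?_⟩
    simp only [mem_ofPred_eq, norm_smul, norm_inv, norm_norm, hyx, inv_mul_cancel₀ hR.ne']
  have hball := (hUeq ▸ hyS).1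
  rw [mem_ball, dist_smul₀, norm_inv, norm_norm, inv_mul_lt_iff₀ hR, mul_div_cancel₀ _ hR.ne']
    at hball
  exact hball.le

theorem exists_pos_eventually_weakNhds_norm_le_add_imp_of_norm_le_imp {x : X} (hx : x ≠ 0)
    {δ δ' : ℝ} (hδ : δ < δ') (h : ∀ᶠ y in weakNhds x, ‖y‖ ≤ ‖x‖ → y ∈ closedBall x δ) :
    ∃ η > 0, ∀ᶠ y in weakNhds x, ‖y‖ ≤ ‖x‖ + η → y ∈ closedBall x δ' := by
  have hR : 0 < ‖x‖ := norm_pos_iff.2 hx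
  have hsmul : ∀ᶠ p in 𝓝 (1 : ℝ) ×ˢ weakNhds x,
      ‖p.1 • p.2‖ ≤ ‖x‖ → p.1 • p.2 ∈ closedBall x δ :=
    (tendsto_smul_weakNhds 1 x).eventually (by rwa [one_smul])
  obtain ⟨T, hT, Y, hY, hTY⟩ := eventually_prod_iff.1 hsmul
  -- `t = ‖x‖ / (‖x‖ + η)` maps the ball of radius `‖x‖ + η` onto that of radius `‖x‖`,
  -- and `t → 1` as `η → 0`
  have hlim : Tendsto (fun η : ℝ => ‖x‖ / (‖x‖ + η)) (𝓝[>] 0) (𝓝 1) := by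
    have : ContinuousAt (fun η : ℝ => ‖x‖ / (‖x‖ + η)) 0 :=
      continuousAt_const.div (continuousAt_const.add continuousAt_id) (by simpa using hR.ne')
    simpa [hR.ne'] using this.tendsto.mono_left nhdsWithin_le_nhds
  obtain ⟨η, ⟨hηT, hηδ⟩, hη⟩ := ((hlim.eventually hT).and
    ((eventually_le_nhds (sub_pos.2 hδ)).filter_mono nhdsWithin_le_nhds)
    |>.and self_mem_nhdsWithin).exists
  refine ⟨η, hη, ?_⟩
  filter_upwards [hY] with y hyY hyη
  set t := ‖x‖ / (‖x‖ + η)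
  have hRη : 0 < ‖x‖ + η := by linarith
  have ht : t • y ∈ closedBall x δ := by
    refine hTY hηT hyY ?_
    rw [norm_smul, Real.norm_of_nonneg (by positivity)]
    calc t * ‖y‖ ≤ t * (‖x‖ + η) := by gcongr
      _ = ‖x‖ := div_mul_cancel₀ _ hRη.ne'
  have hyt : dist y (t • y) ≤ η := by
    have h1t : 1 - t = η / (‖x‖ + η) := by unfold t; field_simp; ring
    rw [dist_eq_norm, ← one_smul ℝ y, smul_smul, mul_one, ← sub_smul, norm_smul, h1t,
      Real.norm_of_nonneg (by positivity)]
    calc η / (‖x‖ + η) * ‖y‖ ≤ η / (‖x‖ + η) * (‖x‖ + η) := by gcongr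
      _ = η := div_mul_cancel₀ _ hRη.ne'
  rw [mem_closedBall] at ht ⊢
  linarith [dist_triangle y (t • y) x]

theorem KadecNorm.exists_pos_eventually_weakNhds_norm_le_add_imp (hK : KadecNorm X) (x : X)
    {δ : ℝ} (hδ : 0 < δ) :
    ∃ η > 0, ∀ᶠ y in weakNhds x, ‖y‖ ≤ ‖x‖ + η → y ∈ closedBall x δ := by
  by_cases hX : FiniteDimensional ℝ X
  · exact ⟨1, one_pos,
    Eventually.mono (weakNhds_le_nhds x (closedBall_mem_nhds x hδ)) fun _ hy _ => hy⟩
  by_cases hx : x = 0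
  · subst hx
    exact ⟨δ, hδ, .of_forall fun y hy => by simpa using hy⟩
  have hsphere := hK.eventually_weakNhds_norm_eq_imp hx (half_pos hδ)
  exact exists_pos_eventually_weakNhds_norm_le_add_imp_of_norm_le_imp hx (half_lt_self hδ)
    (eventually_weakNhds_norm_le_imp_of_norm_eq hX hsphere)

def kadecPiece (ε q : ℝ) : Set X :=
  {x | ‖x‖ ≤ q ∧ ∀ᶠ y in weakNhds x, ‖y‖ ≤ q → y ∈ closedBall x ε}

theorem KadecNorm.iUnion_kadecPiece_eq_univ (hK : KadecNorm X) {ε : ℝ} (hε : 0 < ε) :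
    ⋃ q : ℚ, kadecPiece ε (q : ℝ) = (univ : Set X) := by
  refine eq_univ_of_forall fun x => ?_
  obtain ⟨η, hη, hx⟩ := hK.exists_pos_eventually_weakNhds_norm_le_add_imp x hε
  obtain ⟨q, hxq, hqη⟩ := exists_rat_btwn (lt_add_of_pos_right ‖x‖ hη)
  exact mem_iUnion.2 ⟨q, hxq.le, hx.mono fun y hy hyq => hy (hyq.trans hqη.le)⟩

theorem exists_weaklyOpen_inter_kadecPiece_subset {ε q : ℝ} {x : X} (hx : x ∈ kadecPiece ε q) :
    ∃ W : Set X, WeaklyOpen W ∧ x ∈ W ∧ W ∩ kadecPiece ε q ⊆ closedBall x ε := by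
  obtain ⟨W, hW, hxW, hWε⟩ := exists_weaklyOpen_of_eventually_weakNhds hx.2
  exact ⟨W, hW, hxW, fun y hy => hWε y hy.1 hy.2.1⟩

end

theorem stmt3_general {X : Type*} [NormedAddCommGroup X] [NormedSpace ℝ X]
    (hK : KadecNorm X) (ε : ℝ) (hε : 0 < ε) :
    ∃ Xi : ℕ → Set X, (⋃ i, Xi i) = Set.univ ∧
      ∀ i : ℕ, ∀ x ∈ Xi i, ∃ W : Set X, WeaklyOpen W ∧ x ∈ W ∧
        W ∩ Xi i ⊆ Metric.closedBall x ε ∧ Metric.diam (W ∩ Xi i) ≤ 2 * ε := by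
  refine ⟨fun n => kadecPiece ε ((Denumerable.eqv ℚ).symm n), ?_, fun n x hx => ?_⟩
  · rw [← hK.iUnion_kadecPiece_eq_univ hε]
    exact (Denumerable.eqv ℚ).symm.surjective.iUnion_comp fun q => kadecPiece ε (q : ℝ)
  · obtain ⟨W, hW, hxW, hWε⟩ := exists_weaklyOpen_inter_kadecPiece_subset hx
    exact ⟨W, hW, hxW, hWε, (diam_mono hWε isBounded_closedBall).trans (diam_closedBall hε.le)⟩

theorem stmt3 {X : Type*} [NormedAddCommGroup X] [NormedSpace ℝ X] [CompleteSpace X]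
    (hK : KadecNorm X) (ε : ℝ) (hε : 0 < ε) :
    ∃ Xi : ℕ → Set X, (⋃ i, Xi i) = Set.univ ∧
      ∀ i : ℕ, ∀ x ∈ Xi i, ∃ W : Set X, WeaklyOpen W ∧ x ∈ W ∧
        W ∩ Xi i ⊆ Metric.closedBall x ε ∧ Metric.diam (W ∩ Xi i) ≤ 2 * ε :=
  stmt3_general hK ε hε
end

section
/- Let X be a Banach space with a Kadec norm, and for each x ∈ X and ε > 0 let α_{ε,x} > 0 and weakly open W_{ε,x} ∋ x be such that y ∈ W_{ε,x} and |‖y‖ − ‖x‖| ≤ α_{ε,x} imply ‖y − x‖ < ε. Fix ε > 0 and for positive integers k and nonnegative integers n define X_{kn} = {x ∈ X : α_{ε,x} > 2/k and n/k ≤ ‖x‖ ≤ (n+1)/k}. Then the sets X_{kn} cover X, and for every x ∈ X_{kn}, the set W_{ε,x} ∩ X_{kn} is contained in x + εB. -/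
open Metric Set

theorem stmt4 {X : Type*} [NormedAddCommGroup X] [NormedSpace ℝ X] [CompleteSpace X]
    (hK : KadecNorm X) (ε : ℝ) (hε : 0 < ε)
    (α : X → ℝ) (W : X → Set X)
    (hα : ∀ x : X, 0 < α x)
    (hWopen : ∀ x : X, WeaklyOpen (W x)) (hxW : ∀ x : X, x ∈ W x)
    (hprop : ∀ x y : X, y ∈ W x → |‖y‖ - ‖x‖| ≤ α x → ‖y - x‖ < ε)
    (Xkn : ℕ → ℕ → Set X)
    (hXkn : ∀ k n : ℕ, Xkn k n =
      {x : X | α x > 2 / (k : ℝ) ∧ (n : ℝ) / k ≤ ‖x‖ ∧ ‖x‖ ≤ ((n : ℝ) + 1) / k}) :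
    (∀ x : X, ∃ k : ℕ, 1 ≤ k ∧ ∃ n : ℕ, x ∈ Xkn k n) ∧
    (∀ k : ℕ, 1 ≤ k → ∀ n : ℕ, ∀ x ∈ Xkn k n,
      W x ∩ Xkn k n ⊆ Metric.closedBall x ε) := by
  constructor
  · intro x
    obtain ⟨k, hk⟩ := exists_nat_gt (max 1 (2 / α x))
    have hk1 : 1 ≤ k := by
      have := lt_of_le_of_lt (le_max_left 1 (2 / α x)) hk
      exact_mod_cast this.le
    have hkpos : (0:ℝ) < k := by exact_mod_cast hk1
    refine ⟨k, hk1, ⌊‖x‖ * k⌋₊, ?_⟩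
    rw [hXkn]
    have hnx : (0:ℝ) ≤ ‖x‖ * k := by positivity
    refine ⟨?_, ?_, ?_⟩
    · have h2 : 2 / α x < k := lt_of_le_of_lt (le_max_right _ _) hk
      rw [div_lt_iff₀ (hα x)] at h2
      rw [gt_iff_lt, div_lt_iff₀ hkpos]
      linarith
    · rw [div_le_iff₀ hkpos]
      exact Nat.floor_le hnx
    · rw [le_div_iff₀ hkpos]
      exact (Nat.lt_floor_add_one (‖x‖ * k)).le
  · intro k hk1 n x hx y hy
    have hkpos : (0:ℝ) < k := by exact_mod_cast hk1
    rw [hXkn] at hx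
    obtain ⟨hxα, hx1, hx2⟩ := hx
    obtain ⟨hyW, hy2⟩ := hy
    rw [hXkn] at hy2
    obtain ⟨_, hy3, hy4⟩ := hy2
    have habs : |‖y‖ - ‖x‖| ≤ α x := by
      rw [abs_le]
      have h1 : ((n:ℝ)+1)/k - (n:ℝ)/k = 1/k := by ring
      have h2 : (1:ℝ)/k ≤ 2/k := by
        gcongr
        norm_num
      constructor <;> nlinarith [hα x]
    have := hprop x y hyW habs
    rw [mem_closedBall, dist_eq_norm]
    linarith
end

section
/- Let X be a Banach space, (A_n) a decreasing sequence of nonempty subsets of the closed unit ball, (μ_n) a sequence of norm-one functionals in X*, and ρ_n = sup{‖x‖ : x ∈ A_n}. Define B_n = {x ∈ A_n : μ_n(x) > ρ_n − 1/(n+1)} and assume A_{n+1} ⊆ B_n for all n. If x belongs to ⋂_n B_n and μ is a weak* cluster point of (μ_n), then μ(x) = ‖x‖ = lim_n ρ_n. -/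
open Metric Set Filter

theorem stmt6 {X : Type*} [NormedAddCommGroup X] [NormedSpace ℝ X] [CompleteSpace X]
    (A : ℕ → Set X) (hAne : ∀ n, (A n).Nonempty)
    (hAball : ∀ n, A n ⊆ Metric.closedBall (0 : X) 1)
    (hAdec : ∀ n, A (n + 1) ⊆ A n)
    (μ : ℕ → X →L[ℝ] ℝ) (hμ : ∀ n, ‖μ n‖ = 1)
    (ρ : ℕ → ℝ) (hρ : ∀ n, ρ n = sSup ((fun x => ‖x‖) '' A n))
    (B : ℕ → Set X) (hB : ∀ n, B n = {x ∈ A n | μ n x > ρ n - 1 / (n + 1)})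
    (hsub : ∀ n, A (n + 1) ⊆ B n)
    (x : X) (hx : x ∈ ⋂ n, B n)
    (ν : WeakDual ℝ X)
    (hν : MapClusterPt ν atTop (fun n => (μ n : WeakDual ℝ X))) :
    ν x = ‖x‖ ∧ Filter.Tendsto ρ atTop (nhds ‖x‖) := by
  simp only [mem_iInter] at hx
  have hxB : ∀ n, x ∈ A n ∧ μ n x > ρ n - 1 / (n + 1) := by
    intro n
    have := hx n
    rw [hB n] at this
    exact this
  -- ‖x‖ ≤ ρ n
  have h1 : ∀ n, ‖x‖ ≤ ρ n := by
    intro n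
    rw [hρ n]
    refine le_csSup ⟨1, ?_⟩ ⟨x, (hxB n).1, rfl⟩
    rintro r ⟨y, hy, rfl⟩
    simpa using hAball n hy
  -- μ n x ≤ ‖x‖
  have h2 : ∀ n, μ n x ≤ ‖x‖ := by
    intro n
    calc μ n x ≤ ‖μ n x‖ := le_abs_self _
    _ ≤ ‖μ n‖ * ‖x‖ := (μ n).le_opNorm x
    _ = ‖x‖ := by rw [hμ n, one_mul]
  have h3 : ∀ n, ρ n < ‖x‖ + 1 / (n + 1) := by
    intro n
    have := (hxB n).2
    linarith [h2 n]
  have htend : Tendsto ρ atTop (nhds ‖x‖) := by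
    have hupper : Tendsto (fun n : ℕ => ‖x‖ + 1 / (n + 1 : ℝ)) atTop (nhds (‖x‖ + 0)) :=
      tendsto_const_nhds.add tendsto_one_div_add_atTop_nhds_zero_nat
    rw [add_zero] at hupper
    exact tendsto_of_tendsto_of_tendsto_of_le_of_le tendsto_const_nhds hupper
      h1 (fun n => (h3 n).le)
  refine ⟨?_, htend⟩
  -- μ n x → ‖x‖
  have hμx : Tendsto (fun n => μ n x) atTop (nhds ‖x‖) := by
    have hlower : Tendsto (fun n : ℕ => ρ n - 1 / (n + 1 : ℝ)) atTop (nhds (‖x‖ - 0)) :=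
      htend.sub tendsto_one_div_add_atTop_nhds_zero_nat
    rw [sub_zero] at hlower
    exact tendsto_of_tendsto_of_tendsto_of_le_of_le hlower tendsto_const_nhds
      (fun n => (hxB n).2.le) h2
  have hcl : MapClusterPt (ν x) atTop (fun n => μ n x) := by
    have hcont : ContinuousAt (fun φ : WeakDual ℝ X => φ x) ν :=
      (WeakDual.eval_continuous x).continuousAt
    exact hν.continuousAt_comp hcont
  exact eq_of_nhds_neBot (hcl.clusterPt.mono hμx)
end
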